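/- Let V = ℝⁿ with weighted inner product ⟨u,v⟩ = ∑ᵢ wᵢ uᵢ vᵢ (wᵢ > 0), let e = ∑ᵢ (1/wᵢ) eᵢ, and let f¹,…,fᵏ be an orthonormal basis of the orthogonal complement of e (so k = n−1). Then for any two indices g, h among 1,…,k and vectors fᵍ = (λᵢ(g))ᵢ, fʰ = (λᵢ(h))ᵢ: ∑_{j=1}^{k} (∑ᵢ wᵢ² λᵢ(j) λᵢ(g) λᵢ(h))² = ∑ᵢ wᵢ³ λᵢ(g)² λᵢ(h)² − (12/(∑ᵢ 1/wᵢ))·0 − (1/∑ᵢ 1/wᵢ)·δ_{g,h}², i.e., ∑_{j=1}^{k} (∑ᵢ wᵢ² λᵢ(j) λᵢ(g) λᵢ(h))² = ∑ᵢ wᵢ³ λᵢ(g)² λᵢ(h)² − δ_{g,h}/(∑ᵢ 1/wᵢ). -/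

import Mathlib

/-!
The vectors `fʲ` together with `e` form an orthogonal basis of `ℝⁿ` for the weighted product,
with squared norms `1` and `S = ∑ᵢ 1/wᵢ`. For a square matrix a one-sided inverse is two-sided,
so orthogonality of the rows turns into the completeness relation
`∑ⱼ λᵢ(j) λᵢ'(j) = δᵢᵢ'/wᵢ - 1/(wᵢ wᵢ' S)`. Expanding the square with it gives, for any `a`,
`∑ⱼ (∑ᵢ aᵢ λᵢ(j))² = ∑ᵢ aᵢ²/wᵢ - (∑ᵢ aᵢ/wᵢ)²/S`; with `aᵢ = wᵢ² λᵢ(g) λᵢ(h)` the last sum is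
`⟨fᵍ, fʰ⟩ = δ_{g,h}`.
-/

open Finset Matrix

theorem Matrix.transpose_mul_diagonal_mul_eq_diagonal_inv {m n K : Type*} [Fintype m] [Fintype n]
    [DecidableEq m] [DecidableEq n] [Field K] (hcard : Fintype.card m = Fintype.card n)
    (L : Matrix m n K) {d : n → K} {c : m → K} (hd : ∀ i, d i ≠ 0) (hc : ∀ r, c r ≠ 0)
    (h : L * diagonal d * Lᵀ = diagonal c) :
    Lᵀ * diagonal c⁻¹ * L = diagonal d⁻¹ := by
  have hright : L * (diagonal d * Lᵀ * diagonal c⁻¹) = 1 := by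
    rw [← Matrix.mul_assoc, ← Matrix.mul_assoc, h, diagonal_mul_diagonal, ← diagonal_one]
    exact congrArg diagonal (funext fun r => mul_inv_cancel₀ (hc r))
  have hleft := (mul_eq_one_comm_of_card_eq (m := m) (n := n) (R := K) hcard).mp hright
  have hdd : diagonal d⁻¹ * diagonal d = 1 := by
    rw [diagonal_mul_diagonal, ← diagonal_one]
    exact congrArg diagonal (funext fun i => inv_mul_cancel₀ (hd i))
  calc Lᵀ * diagonal c⁻¹ * L
      = diagonal d⁻¹ * diagonal d * Lᵀ * diagonal c⁻¹ * L := by rw [hdd, Matrix.one_mul]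
    _ = diagonal d⁻¹ * (diagonal d * Lᵀ * diagonal c⁻¹ * L) := by simp only [Matrix.mul_assoc]
    _ = diagonal d⁻¹ := by rw [hleft, Matrix.mul_one]

section CompletenessRelation

variable {ι κ K : Type*} [Fintype ι] [Fintype κ] [DecidableEq ι] [DecidableEq κ] [Field K]
  {w : κ → K} {l : ι → κ → K}

theorem sum_mul_eq_of_orthonormal_perp (hcard : Fintype.card κ = Fintype.card ι + 1)
    (hw : ∀ i, w i ≠ 0) (hS : ∑ i, (w i)⁻¹ ≠ 0)
    (horth : ∀ j j', ∑ i, w i * l j i * l j' i = if j = j' then 1 else 0)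
    (hperp : ∀ j, ∑ i, l j i = 0) (i i' : κ) :
    ∑ j, l j i * l j i' = (if i = i' then (w i)⁻¹ else 0) - (w i * w i' * ∑ k, (w k)⁻¹)⁻¹ := by
  set S := ∑ k, (w k)⁻¹
  -- `e` is adjoined as the row `none`
  let L : Matrix (Option ι) κ K := Matrix.of fun r i => r.elim (w i)⁻¹ (fun j => l j i)
  let c : Option ι → K := fun r => r.elim S (fun _ => 1)
  have hL : L * diagonal w * Lᵀ = diagonal c := by
    ext (_ | j) (_ | j') <;> rw [Matrix.mul_apply] <;>
      simp only [L, c, mul_diagonal, transpose_apply, of_apply, Option.elim, diagonal_apply,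
        reduceCtorEq, Option.some.injEq, if_true, if_false]
    · exact sum_congr rfl fun k _ => by field_simp [hw k]
    · simp [hw, hperp]
    · simp [hw, hperp]
    · rw [← horth j j']
      exact sum_congr rfl fun k _ => by ring
  have hentry := congrFun₂ (Matrix.transpose_mul_diagonal_mul_eq_diagonal_inv
    (by simp [hcard]) L hw (by rintro (_ | _) <;> simp [c, hS]) hL) i i'
  rw [Matrix.mul_apply, Fintype.sum_option] at hentry
  simp only [L, c, mul_diagonal, transpose_apply, of_apply, Option.elim, diagonal_apply,
    Pi.inv_apply, inv_one, mul_one] at hentry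
  rw [← hentry, mul_inv, mul_inv]
  ring

theorem sum_sq_sum_mul_eq_of_orthonormal_perp (hcard : Fintype.card κ = Fintype.card ι + 1)
    (hw : ∀ i, w i ≠ 0) (hS : ∑ i, (w i)⁻¹ ≠ 0)
    (horth : ∀ j j', ∑ i, w i * l j i * l j' i = if j = j' then 1 else 0)
    (hperp : ∀ j, ∑ i, l j i = 0) (a : κ → K) :
    ∑ j, (∑ i, a i * l j i) ^ 2 =
      ∑ i, a i ^ 2 / w i - (∑ i, a i / w i) ^ 2 / ∑ i, (w i)⁻¹ := by
  calc ∑ j, (∑ i, a i * l j i) ^ 2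
      = ∑ j, ∑ i, ∑ i', a i * a i' * (l j i * l j i') := by
        refine sum_congr rfl fun j _ => ?_
        rw [sq, sum_mul_sum]
        exact sum_congr rfl fun i _ => sum_congr rfl fun i' _ => by ring
    _ = ∑ i, ∑ i', a i * a i' * ∑ j, l j i * l j i' := by
        simp only [mul_sum]
        rw [sum_comm]
        exact sum_congr rfl fun i _ => sum_comm
    _ = ∑ i, ∑ i', a i * a i' *
          ((if i = i' then (w i)⁻¹ else 0) - (w i * w i' * ∑ k, (w k)⁻¹)⁻¹) := by
        simp only [sum_mul_eq_of_orthonormal_perp hcard hw hS horth hperp]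
    _ = ∑ i, a i ^ 2 / w i - (∑ i, a i / w i) ^ 2 / ∑ i, (w i)⁻¹ := by
        simp only [mul_sub, sum_sub_distrib, mul_ite, mul_zero, sum_ite_eq, mem_univ, if_true,
          sq, sum_mul_sum, sum_div]
        congr 1
        · exact sum_congr rfl fun i _ => by ring
        · exact sum_congr rfl fun i _ => sum_congr rfl fun i' _ => by
            rw [mul_inv, mul_inv]; ring

end CompletenessRelation

/-- Parseval identity for the triple products: if `f¹,…,fⁿ⁻¹` is an orthonormal basis of
the orthogonal complement of `e = (1/wᵢ)ᵢ` in `ℝⁿ` with the weighted inner product, then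
`∑ⱼ (∑ᵢ wᵢ² λᵢ(j) λᵢ(g) λᵢ(h))² = ∑ᵢ wᵢ³ λᵢ(g)² λᵢ(h)² - δ_{g,h}/(∑ᵢ 1/wᵢ)`. -/
theorem triple_product_parseval {n : ℕ} (hn : 1 ≤ n) (w : Fin n → ℝ)
    (hw : ∀ i, 0 < w i) (l : Fin (n - 1) → Fin n → ℝ)
    (horth : ∀ j j', ∑ i, w i * l j i * l j' i = if j = j' then 1 else 0)
    (hperp : ∀ j, ∑ i, l j i = 0)
    (g h : Fin (n - 1)) :
    ∑ j, (∑ i, w i ^ 2 * l j i * l g i * l h i) ^ 2 =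
      ∑ i, w i ^ 3 * l g i ^ 2 * l h i ^ 2
        - (if g = h then 1 else 0) / (∑ i, (w i)⁻¹) := by
  have hcard : Fintype.card (Fin n) = Fintype.card (Fin (n - 1)) + 1 := by simp; omega
  have hw₀ : ∀ i, w i ≠ 0 := fun i => (hw i).ne'
  have hS : ∑ i, (w i)⁻¹ ≠ 0 :=
    (sum_pos (fun i _ => inv_pos.mpr (hw i)) (univ_nonempty_iff.mpr ⟨⟨0, hn⟩⟩)).ne'
  have hsummand : ∀ j, ∑ i, w i ^ 2 * l j i * l g i * l h i =
      ∑ i, (w i ^ 2 * l g i * l h i) * l j i :=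
    fun j => sum_congr rfl fun i _ => by ring
  have hdiag : ∀ i, (w i ^ 2 * l g i * l h i) ^ 2 / w i = w i ^ 3 * l g i ^ 2 * l h i ^ 2 :=
    fun i => by field_simp [hw₀ i]
  have hcross : ∑ i, w i ^ 2 * l g i * l h i / w i = if g = h then 1 else 0 := by
    rw [← horth g h]
    exact sum_congr rfl fun i _ => by field_simp [hw₀ i]
  rw [sum_congr rfl fun j _ => congrArg (· ^ 2) (hsummand j),
    sum_sq_sum_mul_eq_of_orthonormal_perp hcard hw₀ hS horth hperp,
    sum_congr rfl fun i _ => hdiag i, hcross]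
  split_ifs <;> norm_num
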